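/- arXiv:2205.08017 — 4 statements merged into one kernel-verified Lean document; each statement's English description precedes it below -/
import Mathlib

section
/- Distribution-dependent Ψ-bound: Let ℓ₁ and ℓ₂ be two loss functions and H a hypothesis set. Assume there exist a convex function Ψ:[0,∞)→ℝ with Ψ(0)≥0 and a constant ε≥0 such that for all h∈H and all x∈X, Ψ(⟨ΔC_{ℓ₂,H}(h,x)⟩_ε) ≤ ΔC_{ℓ₁,H}(h,x). Then for every hypothesis h∈H, Ψ(R_{ℓ₂}(h) − R*_{ℓ₂,H} + M_{ℓ₂,H}) ≤ R_{ℓ₁}(h) − R*_{ℓ₁,H} + M_{ℓ₁,H} + max{Ψ(0), Ψ(ε)}. -/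
open MeasureTheory Set

noncomputable section

/-- Conditional `ℓ`-risk of `h` at `x` with conditional probability level `t`. -/
def condRiskT {X : Type*} (ℓ : (X → ℝ) → X → ℝ → ℝ) (h : X → ℝ) (x : X) (t : ℝ) : ℝ :=
  t * ℓ h x 1 + (1 - t) * ℓ h x (-1)

/-- Conditional `ℓ`-risk of `h` at `x`. -/
def condRisk {X : Type*} (ℓ : (X → ℝ) → X → ℝ → ℝ) (η : X → ℝ) (h : X → ℝ) (x : X) : ℝ :=
  condRiskT ℓ h x (η x)

/-- Minimal conditional `ℓ`-risk over the hypothesis set `H` at `x`. -/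
def condRiskStar {X : Type*} (ℓ : (X → ℝ) → X → ℝ → ℝ) (η : X → ℝ) (H : Set (X → ℝ))
    (x : X) : ℝ :=
  sInf ((fun h => condRisk ℓ η h x) '' H)

/-- `ΔC_{ℓ,H}(h,x)`. -/
def deltaC {X : Type*} (ℓ : (X → ℝ) → X → ℝ → ℝ) (η : X → ℝ) (H : Set (X → ℝ))
    (h : X → ℝ) (x : X) : ℝ :=
  condRisk ℓ η h x - condRiskStar ℓ η H x

/-- `ΔC_{ℓ,H}(h,x,t)`. -/
def deltaCT {X : Type*} (ℓ : (X → ℝ) → X → ℝ → ℝ) (H : Set (X → ℝ))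
    (h : X → ℝ) (x : X) (t : ℝ) : ℝ :=
  condRiskT ℓ h x t - sInf ((fun h' => condRiskT ℓ h' x t) '' H)

/-- Generalization error `R_ℓ(h)`. -/
def genErr {X : Type*} [MeasurableSpace X] (μ : Measure X)
    (ℓ : (X → ℝ) → X → ℝ → ℝ) (η : X → ℝ) (h : X → ℝ) : ℝ :=
  ∫ x, condRisk ℓ η h x ∂μ

/-- Best-in-class error `R*_{ℓ,H}`. -/
def bestErr {X : Type*} [MeasurableSpace X] (μ : Measure X)
    (ℓ : (X → ℝ) → X → ℝ → ℝ) (η : X → ℝ) (H : Set (X → ℝ)) : ℝ :=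
  sInf ((fun h => genErr μ ℓ η h) '' H)

/-- Minimizability gap `M_{ℓ,H}`. -/
def minGap {X : Type*} [MeasurableSpace X] (μ : Measure X)
    (ℓ : (X → ℝ) → X → ℝ → ℝ) (η : X → ℝ) (H : Set (X → ℝ)) : ℝ :=
  bestErr μ ℓ η H - ∫ x, condRiskStar ℓ η H x ∂μ

/-- `ε`-truncation `⟨t⟩_ε = t · 1_{t > ε}`. -/
def trunc (ε t : ℝ) : ℝ := if ε < t then t else 0

/-- sign function: `+1` if `α ≥ 0`, `−1` otherwise. -/
def sgn (a : ℝ) : ℝ := if 0 ≤ a then 1 else -1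

/-- The zero-one loss `ℓ_{0-1}(h,x,y) = 1_{sign(h(x)) ≠ y}`. -/
def loss01 {X : Type*} (h : X → ℝ) (x : X) (y : ℝ) : ℝ :=
  if sgn (h x) ≠ y then 1 else 0

/-- Margin-based loss `ℓ_Φ(h,x,y) = Φ(y h(x))`. -/
def marginLoss {X : Type*} (Φ : ℝ → ℝ) (h : X → ℝ) (x : X) (y : ℝ) : ℝ :=
  Φ (y * h x)

end

/-!
Both excess risks plus minimizability gaps are expectations of the conditional
regrets, `R_ℓ(h) - R*_{ℓ,H} + M_{ℓ,H} = 𝔼[ΔC_{ℓ,H}(h,·)]`. Pointwise, convexity bounds `Ψ` on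
`[0, ε]` by `max (Ψ 0) (Ψ ε)`, so `Ψ (ΔC₂) ≤ Ψ ⟨ΔC₂⟩_ε + max (Ψ 0) (Ψ ε) ≤ ΔC₁ + max (Ψ 0) (Ψ ε)`.
Jensen's inequality for `Ψ` then passes the bound to expectations. Since `Ψ` need be neither
continuous at `0` nor integrable along `ΔC₂`, Jensen is proved directly from a supporting line
at the mean when the mean is positive, and from `ΔC₂ = 0` a.e. when it vanishes.
-/

namespace ConvexOn

variable {S : Set ℝ} {f : ℝ → ℝ} {x y : ℝ}

lemma add_rightDeriv_mul_sub_le (hf : ConvexOn ℝ S f) (hx : x ∈ interior S) (hy : y ∈ S) :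
    f x + derivWithin f (Ioi x) x * (y - x) ≤ f y := by
  rcases lt_trichotomy y x with hyx | rfl | hxy
  · have hslope : slope f y x ≤ derivWithin f (Ioi x) x :=
      (hf.slope_le_leftDeriv_of_mem_interior hy hx hyx).trans
        (hf.leftDeriv_le_rightDeriv_of_mem_interior hx)
    rw [slope_def_field, div_le_iff₀ (sub_pos.2 hyx)] at hslope
    linarith
  · simp
  · have hslope : derivWithin f (Ioi x) x ≤ slope f x y :=
      hf.rightDeriv_le_slope_of_mem_interior hx hy hxy
    rw [slope_def_field, le_div_iff₀ (sub_pos.2 hxy)] at hslope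
    linarith

variable {Ψ : ℝ → ℝ}

lemma map_integral_le_integral_of_ae_le {Ω : Type*} [MeasurableSpace Ω] {μ : Measure Ω}
    [IsProbabilityMeasure μ] (hΨ : ConvexOn ℝ (Ici 0) Ψ) {f g : Ω → ℝ} (hf : Integrable f μ)
    (hf₀ : 0 ≤ᵐ[μ] f) (hg : Integrable g μ) (hfg : ∀ᵐ ω ∂μ, Ψ (f ω) ≤ g ω) :
    Ψ (∫ ω, f ω ∂μ) ≤ ∫ ω, g ω ∂μ := by
  rcases (integral_nonneg_of_ae hf₀).eq_or_lt with hmean | hmean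
  · have hf_ae : f =ᵐ[μ] 0 := (integral_eq_zero_iff_of_nonneg_ae hf₀ hf).1 hmean.symm
    have hle : ∀ᵐ ω ∂μ, Ψ 0 ≤ g ω := by
      filter_upwards [hf_ae, hfg] with ω hω hΨω
      rwa [hω] at hΨω
    rw [← hmean]
    simpa using integral_mono_ae (integrable_const (Ψ 0)) hg hle
  · set a := ∫ ω, f ω ∂μ
    set c := derivWithin Ψ (Ioi a) a
    have ha : a ∈ interior (Ici 0) := by rwa [interior_Ici]
    have hline : ∀ᵐ ω ∂μ, Ψ a + c * (f ω - a) ≤ g ω := by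
      filter_upwards [hf₀, hfg] with ω hω hΨω
      exact (hΨ.add_rightDeriv_mul_sub_le ha hω).trans hΨω
    have hdev : Integrable (fun ω ↦ c * (f ω - a)) μ :=
      (hf.sub (integrable_const a)).const_mul c
    calc Ψ a = ∫ ω, Ψ a + c * (f ω - a) ∂μ := by
          rw [integral_add (integrable_const _) hdev, integral_const_mul,
            integral_sub hf (integrable_const a)]
          simp [a]
      _ ≤ ∫ ω, g ω ∂μ := integral_mono_ae ((integrable_const _).add hdev) hg hline

lemma map_le_map_trunc_add_max (hΨ : ConvexOn ℝ (Ici 0) Ψ) (hΨ₀ : 0 ≤ Ψ 0) {ε t : ℝ}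
    (hε : 0 ≤ ε) (ht : 0 ≤ t) : Ψ t ≤ Ψ (trunc ε t) + max (Ψ 0) (Ψ ε) := by
  unfold trunc
  split_ifs with hεt
  · exact le_add_of_nonneg_right (hΨ₀.trans (le_max_left _ _))
  · have ht_seg : t ∈ segment ℝ 0 ε := by
      rw [segment_eq_Icc hε]
      exact ⟨ht, not_lt.1 hεt⟩
    have := hΨ.le_on_segment self_mem_Ici (mem_Ici.2 hε) ht_seg
    linarith

end ConvexOn

section Risk

variable {X : Type*} {ℓ : (X → ℝ) → X → ℝ → ℝ} {η : X → ℝ} {H : Set (X → ℝ)}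

lemma condRiskT_nonneg {h : X → ℝ} {x : X} {t : ℝ} (ht : t ∈ Icc 0 1)
    (hℓ : ∀ y, 0 ≤ ℓ h x y) : 0 ≤ condRiskT ℓ h x t :=
  add_nonneg (mul_nonneg ht.1 (hℓ 1)) (mul_nonneg (sub_nonneg.2 ht.2) (hℓ (-1)))

lemma bddBelow_condRisk_image (hη : ∀ x, η x ∈ Icc 0 1) (hℓ : ∀ h x y, 0 ≤ ℓ h x y) (x : X) :
    BddBelow ((fun h ↦ condRisk ℓ η h x) '' H) :=
  ⟨0, by rintro _ ⟨h, -, rfl⟩; exact condRiskT_nonneg (hη x) (hℓ h x)⟩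

lemma deltaC_nonneg {h : X → ℝ} {x : X} (hbdd : BddBelow ((fun h ↦ condRisk ℓ η h x) '' H))
    (hh : h ∈ H) : 0 ≤ deltaC ℓ η H h x :=
  sub_nonneg.2 (csInf_le hbdd ⟨h, hh, rfl⟩)

lemma genErr_sub_bestErr_add_minGap [MeasurableSpace X] {μ : Measure X} {h : X → ℝ}
    (hint : Integrable (condRisk ℓ η h) μ) (hint_star : Integrable (condRiskStar ℓ η H) μ) :
    genErr μ ℓ η h - bestErr μ ℓ η H + minGap μ ℓ η H = ∫ x, deltaC ℓ η H h x ∂μ := by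
  simp only [minGap, genErr, deltaC]
  rw [integral_sub hint hint_star]
  ring

end Risk

open MeasureTheory Set in
theorem distribution_dependent_Psi_bound_general
    {X : Type*} [MeasurableSpace X]
    (μ : Measure X) [IsProbabilityMeasure μ]
    (η : X → ℝ) (hη01 : ∀ x, η x ∈ Icc (0:ℝ) 1)
    (H : Set (X → ℝ))
    (ℓ₁ ℓ₂ : (X → ℝ) → X → ℝ → ℝ)
    (hℓ₂pos : ∀ h x y, 0 ≤ ℓ₂ h x y)
    (hInt₁ : ∀ g ∈ H, Integrable (condRisk ℓ₁ η g) μ)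
    (hInt₂ : ∀ g ∈ H, Integrable (condRisk ℓ₂ η g) μ)
    (hIntS₁ : Integrable (condRiskStar ℓ₁ η H) μ)
    (hIntS₂ : Integrable (condRiskStar ℓ₂ η H) μ)
    (Ψ : ℝ → ℝ) (hΨconv : ConvexOn ℝ (Ici (0:ℝ)) Ψ) (hΨ0 : 0 ≤ Ψ 0)
    (ε : ℝ) (hε : 0 ≤ ε)
    (hcond : ∀ h ∈ H, ∀ x : X, Ψ (trunc ε (deltaC ℓ₂ η H h x)) ≤ deltaC ℓ₁ η H h x)
    (h : X → ℝ) (hh : h ∈ H) :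
    Ψ (genErr μ ℓ₂ η h - bestErr μ ℓ₂ η H + minGap μ ℓ₂ η H)
      ≤ genErr μ ℓ₁ η h - bestErr μ ℓ₁ η H + minGap μ ℓ₁ η H + max (Ψ 0) (Ψ ε) := by
  rw [genErr_sub_bestErr_add_minGap (hInt₂ h hh) hIntS₂,
    genErr_sub_bestErr_add_minGap (hInt₁ h hh) hIntS₁]
  have hΔ₂ : ∀ x, 0 ≤ deltaC ℓ₂ η H h x := fun x ↦
    deltaC_nonneg (bddBelow_condRisk_image hη01 hℓ₂pos x) hh
  have hpointwise : ∀ x, Ψ (deltaC ℓ₂ η H h x) ≤ deltaC ℓ₁ η H h x + max (Ψ 0) (Ψ ε) :=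
    fun x ↦ (hΨconv.map_le_map_trunc_add_max hΨ0 hε (hΔ₂ x)).trans
      (add_le_add_left (hcond h hh x) _)
  have hΔ₁_int : Integrable (deltaC ℓ₁ η H h) μ := (hInt₁ h hh).sub hIntS₁
  calc Ψ (∫ x, deltaC ℓ₂ η H h x ∂μ)
      ≤ ∫ x, deltaC ℓ₁ η H h x + max (Ψ 0) (Ψ ε) ∂μ :=
        hΨconv.map_integral_le_integral_of_ae_le ((hInt₂ h hh).sub hIntS₂)
          (ae_of_all _ hΔ₂) (hΔ₁_int.add (integrable_const _)) (ae_of_all _ hpointwise)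
    _ = ∫ x, deltaC ℓ₁ η H h x ∂μ + max (Ψ 0) (Ψ ε) := by
        rw [integral_add hΔ₁_int (integrable_const _)]
        simp

open MeasureTheory Set in
/-- **Distribution-dependent Ψ-bound** (Theorem 1). -/
theorem distribution_dependent_Psi_bound
    {X : Type*} [MeasurableSpace X] [Nonempty X]
    (μ : Measure X) [IsProbabilityMeasure μ]
    (η : X → ℝ) (hηmeas : Measurable η) (hη01 : ∀ x, η x ∈ Icc (0:ℝ) 1)
    (H : Set (X → ℝ)) (hHne : H.Nonempty) (hHmeas : ∀ h ∈ H, Measurable h)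
    (ℓ₁ ℓ₂ : (X → ℝ) → X → ℝ → ℝ)
    (hℓ₁pos : ∀ h x y, 0 ≤ ℓ₁ h x y) (hℓ₂pos : ∀ h x y, 0 ≤ ℓ₂ h x y)
    (hInt₁ : ∀ g ∈ H, Integrable (condRisk ℓ₁ η g) μ)
    (hInt₂ : ∀ g ∈ H, Integrable (condRisk ℓ₂ η g) μ)
    (hIntS₁ : Integrable (condRiskStar ℓ₁ η H) μ)
    (hIntS₂ : Integrable (condRiskStar ℓ₂ η H) μ)
    (Ψ : ℝ → ℝ) (hΨconv : ConvexOn ℝ (Ici (0:ℝ)) Ψ) (hΨ0 : 0 ≤ Ψ 0)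
    (ε : ℝ) (hε : 0 ≤ ε)
    (hcond : ∀ h ∈ H, ∀ x : X, Ψ (trunc ε (deltaC ℓ₂ η H h x)) ≤ deltaC ℓ₁ η H h x)
    (h : X → ℝ) (hh : h ∈ H) :
    Ψ (genErr μ ℓ₂ η h - bestErr μ ℓ₂ η H + minGap μ ℓ₂ η H)
      ≤ genErr μ ℓ₁ η h - bestErr μ ℓ₁ η H + minGap μ ℓ₁ η H + max (Ψ 0) (Ψ ε) :=
  distribution_dependent_Psi_bound_general μ η hη01 H ℓ₁ ℓ₂ hℓ₂pos hInt₁ hInt₂ hIntS₁ hIntS₂ Ψ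
    hΨconv hΨ0 ε hε hcond h hh
end

section
/- Distribution-dependent Γ-bound: Let ℓ₁ and ℓ₂ be two loss functions and H a hypothesis set. Assume there exist a concave function Γ:[0,∞)→ℝ and a constant ε≥0 such that for all h∈H and all x∈X, ⟨ΔC_{ℓ₂,H}(h,x)⟩_ε ≤ Γ(ΔC_{ℓ₁,H}(h,x)). Then for every hypothesis h∈H, R_{ℓ₂}(h) − R*_{ℓ₂,H} ≤ Γ(R_{ℓ₁}(h) − R*_{ℓ₁,H} + M_{ℓ₁,H}) − M_{ℓ₂,H} + ε. -/
open MeasureTheory Set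

/-- Supporting line for a concave function on `Ici 0` at an interior point. -/
lemma concave_support_line (Γ : ℝ → ℝ) (hΓ : ConcaveOn ℝ (Ici (0:ℝ)) Γ)
    {m : ℝ} (hm : 0 < m) :
    ∃ s : ℝ, ∀ x ∈ Ici (0:ℝ), Γ x ≤ Γ m + s * (x - m) := by
  set S : Set ℝ := (fun a => (Γ m - Γ a) / (m - a)) '' Ico 0 m with hS
  have hne : S.Nonempty := ⟨_, ⟨0, ⟨le_refl _, hm⟩, rfl⟩⟩
  have hmem : m ∈ Ici (0:ℝ) := le_of_lt hm
  have hbdd : BddBelow S := by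
    refine ⟨Γ (m+1) - Γ m, ?_⟩
    rintro r ⟨a, ⟨ha0, ham⟩, rfl⟩
    have := hΓ.slope_anti_adjacent (x := a) (y := m) (z := m+1) ha0
      (le_trans (le_of_lt hm) (by linarith)) ham (by linarith)
    have h1 : (Γ (m+1) - Γ m) / (m + 1 - m) = Γ (m+1) - Γ m := by
      rw [show m + 1 - m = 1 by ring, div_one]
    calc Γ (m+1) - Γ m = (Γ (m+1) - Γ m) / (m + 1 - m) := h1.symm
      _ ≤ (Γ m - Γ a) / (m - a) := this
  refine ⟨sInf S, fun x hx => ?_⟩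
  rcases lt_trichotomy x m with hlt | heq | hgt
  · have hsle : sInf S ≤ (Γ m - Γ x) / (m - x) :=
      csInf_le hbdd ⟨x, ⟨hx, hlt⟩, rfl⟩
    have hpos : (0:ℝ) < m - x := by linarith
    have h2 : sInf S * (m - x) ≤ Γ m - Γ x := (le_div_iff₀ hpos).mp hsle
    nlinarith [h2]
  · simp [heq]
  · have hlow : (Γ x - Γ m) / (x - m) ≤ sInf S := by
      refine le_csInf hne ?_
      rintro r ⟨a, ⟨ha0, ham⟩, rfl⟩
      have := hΓ.slope_anti_adjacent (x := a) (y := m) (z := x) ha0 hx ham hgt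
      simpa only [slope_def_field] using this
    have hpos : (0:ℝ) < x - m := by linarith
    nlinarith [(div_le_iff₀ hpos).mp hlow]

open MeasureTheory Set in
/-- **Distribution-dependent Γ-bound** (Theorem 2). -/
theorem distribution_dependent_Gamma_bound
    {X : Type*} [MeasurableSpace X] [Nonempty X]
    (μ : Measure X) [IsProbabilityMeasure μ]
    (η : X → ℝ) (hηmeas : Measurable η) (hη01 : ∀ x, η x ∈ Icc (0:ℝ) 1)
    (H : Set (X → ℝ)) (hHne : H.Nonempty) (hHmeas : ∀ h ∈ H, Measurable h)
    (ℓ₁ ℓ₂ : (X → ℝ) → X → ℝ → ℝ)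
    (hℓ₁pos : ∀ h x y, 0 ≤ ℓ₁ h x y) (hℓ₂pos : ∀ h x y, 0 ≤ ℓ₂ h x y)
    (hInt₁ : ∀ g ∈ H, Integrable (condRisk ℓ₁ η g) μ)
    (hInt₂ : ∀ g ∈ H, Integrable (condRisk ℓ₂ η g) μ)
    (hIntS₁ : Integrable (condRiskStar ℓ₁ η H) μ)
    (hIntS₂ : Integrable (condRiskStar ℓ₂ η H) μ)
    (Γ : ℝ → ℝ) (hΓconc : ConcaveOn ℝ (Ici (0:ℝ)) Γ)
    (ε : ℝ) (hε : 0 ≤ ε)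
    (hcond : ∀ h ∈ H, ∀ x : X, trunc ε (deltaC ℓ₂ η H h x) ≤ Γ (deltaC ℓ₁ η H h x))
    (h : X → ℝ) (hh : h ∈ H) :
    genErr μ ℓ₂ η h - bestErr μ ℓ₂ η H
      ≤ Γ (genErr μ ℓ₁ η h - bestErr μ ℓ₁ η H + minGap μ ℓ₁ η H) - minGap μ ℓ₂ η H + ε := by
  -- nonnegativity of conditional risks
  have hCnn : ∀ (ℓ : (X → ℝ) → X → ℝ → ℝ), (∀ g x y, 0 ≤ ℓ g x y) →
      ∀ g x, 0 ≤ condRisk ℓ η g x := by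
    intro ℓ hℓ g x
    have h0 := (hη01 x).1
    have h1 := (hη01 x).2
    have ha := hℓ g x 1
    have hb := hℓ g x (-1)
    unfold condRisk condRiskT
    nlinarith
  -- nonnegativity of deltaC for h
  have hΔnn : ∀ (ℓ : (X → ℝ) → X → ℝ → ℝ), (∀ g x y, 0 ≤ ℓ g x y) →
      ∀ x, 0 ≤ deltaC ℓ η H h x := by
    intro ℓ hℓ x
    have hbdd : BddBelow ((fun g => condRisk ℓ η g x) '' H) := by
      refine ⟨0, ?_⟩
      rintro r ⟨g, hg, rfl⟩
      exact hCnn ℓ hℓ g x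
    have hle : condRiskStar ℓ η H x ≤ condRisk ℓ η h x :=
      csInf_le hbdd ⟨h, hh, rfl⟩
    simpa [deltaC] using sub_nonneg.mpr hle
  have hΔ₁nn := hΔnn ℓ₁ hℓ₁pos
  have hΔ₂nn := hΔnn ℓ₂ hℓ₂pos
  have hIΔ₁ : Integrable (fun x => deltaC ℓ₁ η H h x) μ := (hInt₁ h hh).sub hIntS₁
  have hIΔ₂ : Integrable (fun x => deltaC ℓ₂ η H h x) μ := (hInt₂ h hh).sub hIntS₂
  set m : ℝ := ∫ x, deltaC ℓ₁ η H h x ∂μ with hm_def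
  have hm_eq : m = genErr μ ℓ₁ η h - ∫ x, condRiskStar ℓ₁ η H x ∂μ := by
    rw [hm_def]
    simpa [genErr, deltaC] using integral_sub (hInt₁ h hh) hIntS₁
  have he₂ : (∫ x, deltaC ℓ₂ η H h x ∂μ)
      = genErr μ ℓ₂ η h - ∫ x, condRiskStar ℓ₂ η H x ∂μ := by
    simpa [genErr, deltaC] using integral_sub (hInt₂ h hh) hIntS₂
  -- pointwise bound
  have hpt : ∀ x, deltaC ℓ₂ η H h x ≤ Γ (deltaC ℓ₁ η H h x) + ε := by
    intro x
    have hc := hcond h hh x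
    unfold trunc at hc
    split_ifs at hc <;> linarith
  have hmnn : 0 ≤ m := integral_nonneg hΔ₁nn
  -- key inequality
  have key : (∫ x, deltaC ℓ₂ η H h x ∂μ) ≤ Γ m + ε := by
    rcases eq_or_lt_of_le hmnn with hm0 | hmpos
    · -- m = 0 : deltaC₁ vanishes a.e.
      have hae : (fun x => deltaC ℓ₁ η H h x) =ᵐ[μ] 0 := by
        refine (integral_eq_zero_iff_of_nonneg ?_ hIΔ₁).mp hm0.symm
        intro x; exact hΔ₁nn x
      have hb : (∫ x, deltaC ℓ₂ η H h x ∂μ) ≤ ∫ _x, (Γ 0 + ε) ∂μ := by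
        refine integral_mono_ae hIΔ₂ (integrable_const _) ?_
        filter_upwards [hae] with x hx
        have := hpt x
        simp only [Pi.zero_apply] at hx
        rw [hx] at this
        exact this
      calc (∫ x, deltaC ℓ₂ η H h x ∂μ) ≤ ∫ _x, (Γ 0 + ε) ∂μ := hb
        _ = Γ 0 + ε := by simp
        _ = Γ m + ε := by rw [← hm0]
    · -- m > 0 : supporting line
      obtain ⟨s, hs⟩ := concave_support_line Γ hΓconc hmpos
      have hpt2 : ∀ x, deltaC ℓ₂ η H h x ≤ Γ m + s * (deltaC ℓ₁ η H h x - m) + ε := by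
        intro x
        have h1 := hpt x
        have h2 := hs (deltaC ℓ₁ η H h x) (hΔ₁nn x)
        linarith
      have hIR : Integrable (fun x => Γ m + s * (deltaC ℓ₁ η H h x - m) + ε) μ :=
        (((integrable_const (Γ m)).add ((hIΔ₁.sub (integrable_const m)).const_mul s)).add
          (integrable_const ε))
      have hb : (∫ x, deltaC ℓ₂ η H h x ∂μ)
          ≤ ∫ x, (Γ m + s * (deltaC ℓ₁ η H h x - m) + ε) ∂μ :=
        integral_mono hIΔ₂ hIR hpt2
      have hcalc : (∫ x, (Γ m + s * (deltaC ℓ₁ η H h x - m) + ε) ∂μ) = Γ m + ε := by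
        have hfe : (fun x => Γ m + s * (deltaC ℓ₁ η H h x - m) + ε)
            = (fun x => (Γ m + ε - s * m) + s * deltaC ℓ₁ η H h x) := by
          funext x; ring
        rw [hfe, integral_add (integrable_const _) (hIΔ₁.const_mul s),
          integral_const, integral_const_mul, ← hm_def]
        simp
      linarith [hb, hcalc ▸ hb]
  -- assemble
  have harg : genErr μ ℓ₁ η h - bestErr μ ℓ₁ η H + minGap μ ℓ₁ η H = m := by
    unfold minGap; linarith [hm_eq]
  rw [harg]
  unfold minGap
  linarith [key, he₂]
end

section
/- Adversarial tightness: Suppose H is symmetric, Φ̃ is the supremum-based loss of Φ:ℝ→[0,∞), and there exists x∈X with H̄_γ(x) ≠ H. Define T̂₁(t) = inf{ΔC_{Φ̃,H}(h,x,t) : x∈X, h∈H̄_γ(x), H̄_γ(x) ⊊ H} and T̂₂(t) = inf{ΔC_{Φ̃,H}(h,x,(t+1)/2) : x∈X, h∈H, o_h(x)<0}; let T₁(t)=T̂₁(t) for t∈[1/2,1] and T₁(t)=2·T̂₁(1/2)·t for t∈[0,1/2), let T₂(t)=T̂₂(t) on [0,1], and set T_Φ̃ = min{T₁,T₂}. If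 T_Φ̃ is convex with T_Φ̃(0)=0 and T₂(t) ≤ T₁(t) for all t∈[0,1], then for every t∈[0,1] and every δ>0 there exist a distribution D over X×Y (a pair (μ,η)) and a hypothesis h∈H such that R_{ℓ_γ}(h) − R*_{ℓ_γ,H} + M_{ℓ_γ,H} = t and T_Φ̃(t) ≤ R_{Φ̃}(h) − R*_{Φ̃,H} + M_{Φ̃,H} ≤ T_Φ̃(t) + δ (all computed with respect to D). -/
open MeasureTheory Set
open scoped ENNReal

noncomputable section

/-- Generalization error `R_ℓ(h)` with respect to the input-space set `XS`. -/
def genErrS {X : Type*} [MeasurableSpace X] (μ : Measure X) (XS : Set X)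
    (ℓ : (X → ℝ) → X → ℝ → ℝ) (η : X → ℝ) (h : X → ℝ) : ℝ :=
  ∫ x in XS, condRisk ℓ η h x ∂μ

/-- Best-in-class error `R*_{ℓ,H}`. -/
def bestErrS {X : Type*} [MeasurableSpace X] (μ : Measure X) (XS : Set X)
    (ℓ : (X → ℝ) → X → ℝ → ℝ) (η : X → ℝ) (H : Set (X → ℝ)) : ℝ :=
  sInf ((fun h => genErrS μ XS ℓ η h) '' H)

/-- Minimizability gap `M_{ℓ,H}`. -/
def minGapS {X : Type*} [MeasurableSpace X] (μ : Measure X) (XS : Set X)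
    (ℓ : (X → ℝ) → X → ℝ → ℝ) (η : X → ℝ) (H : Set (X → ℝ)) : ℝ :=
  bestErrS μ XS ℓ η H - ∫ x in XS, condRiskStar ℓ η H x ∂μ

/-- `u_h(x) = inf_{‖x−x'‖ ≤ γ} h(x')`. -/
def uInf {E : Type*} [NormedAddCommGroup E] (γ : ℝ) (h : E → ℝ) (x : E) : ℝ :=
  sInf (h '' {x' | ‖x - x'‖ ≤ γ})

/-- `o_h(x) = sup_{‖x−x'‖ ≤ γ} h(x')`. -/
def oSup {E : Type*} [NormedAddCommGroup E] (γ : ℝ) (h : E → ℝ) (x : E) : ℝ :=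
  sSup (h '' {x' | ‖x - x'‖ ≤ γ})

/-- The adversarial zero-one loss `ℓ_γ(h,x,y) = sup_{‖x−x'‖ ≤ γ} 1_{y·h(x') ≤ 0}`. -/
def lossGamma {E : Type*} [NormedAddCommGroup E] (γ : ℝ) (h : E → ℝ) (x : E) (y : ℝ) : ℝ :=
  sSup ((fun x' => if y * h x' ≤ 0 then (1:ℝ) else 0) '' {x' | ‖x - x'‖ ≤ γ})

/-- The supremum-based loss `Φ̃(h,x,y) = sup_{‖x−x'‖ ≤ γ} Φ(y·h(x'))`. -/
def supLoss {E : Type*} [NormedAddCommGroup E] (γ : ℝ) (Φ : ℝ → ℝ)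
    (h : E → ℝ) (x : E) (y : ℝ) : ℝ :=
  sSup ((fun x' => Φ (y * h x')) '' {x' | ‖x - x'‖ ≤ γ})

/-- `H̄_γ(x) = {h ∈ H : u_h(x) ≤ 0 ≤ o_h(x)}`. -/
def Hbar {E : Type*} [NormedAddCommGroup E] (γ : ℝ) (H : Set (E → ℝ)) (x : E) :
    Set (E → ℝ) :=
  {h ∈ H | uInf γ h x ≤ 0 ∧ 0 ≤ oSup γ h x}

/-- A hypothesis set is symmetric when it is closed under negation. -/
def IsSymmetricHyp {E : Type*} (H : Set (E → ℝ)) : Prop :=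
  ∀ h : E → ℝ, h ∈ H ↔ (fun x => -(h x)) ∈ H

end

/-!
Since `T₂ ≤ T₁`, `T_Φ̃ = T₂`. Take `x` and `h` with `o_h(x) < 0` whose conditional `Φ̃`-regret
at level `(t + 1) / 2` is within `δ` of `T̂₂(t)`, and let `D` be the point mass at `x` with
constant `η = (t + 1) / 2`. For a point mass the minimizability gap cancels the best-in-class
error, so both quantities of the theorem are conditional regrets at `x`. For the adversarial
zero-one loss, `h` is negative on the whole ball and `-h ∈ H` is positive on it, which makes the
regret `2η - 1 = t`.
-/

section AdversarialLosses

open Set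

variable {E : Type*} [NormedAddCommGroup E] {γ : ℝ}

lemma setOf_norm_sub_le_nonempty (hγ : 0 ≤ γ) (x : E) : {x' : E | ‖x - x'‖ ≤ γ}.Nonempty :=
  ⟨x, by simpa using hγ⟩

lemma oSup_neg_eq_neg_uInf (h : E → ℝ) (x : E) : oSup γ (fun y => -h y) x = -uInf γ h x := by
  rw [oSup, uInf, ← Real.sSup_neg, ← image_neg_eq_neg, image_image]

lemma lt_zero_of_oSup_lt_zero {h : E → ℝ} {x x' : E} (ho : oSup γ h x < 0)
    (hx' : ‖x - x'‖ ≤ γ) : h x' < 0 := by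
  have hbdd : BddAbove (h '' {x' | ‖x - x'‖ ≤ γ}) := by
    by_contra hbdd
    rw [oSup, Real.sSup_of_not_bddAbove hbdd] at ho
    exact lt_irrefl 0 ho
  exact (le_csSup hbdd ⟨x', hx', rfl⟩).trans_lt ho

/-- Outside `H̄_γ(x)` a hypothesis has constant sign on the ball, so up to symmetry it is negative
there. -/
lemma exists_oSup_neg_of_Hbar_ne {H : Set (E → ℝ)} (hsym : IsSymmetricHyp H) {x : E}
    (hx : Hbar γ H x ≠ H) : ∃ h ∈ H, oSup γ h x < 0 := by
  obtain ⟨g, hgH, hg⟩ : ∃ g ∈ H, g ∉ Hbar γ H x := by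
    by_contra! hall
    exact hx (Subset.antisymm (fun g hg => hg.1) hall)
  have hg' : ¬(uInf γ g x ≤ 0 ∧ 0 ≤ oSup γ g x) := fun hu => hg ⟨hgH, hu⟩
  by_cases hu : uInf γ g x ≤ 0
  · exact ⟨g, hgH, lt_of_not_ge fun ho => hg' ⟨hu, ho⟩⟩
  · refine ⟨fun y => -g y, (hsym g).1 hgH, ?_⟩
    rw [oSup_neg_eq_neg_uInf]
    linarith

lemma lossGamma_bddAbove (h : E → ℝ) (x : E) (y : ℝ) :
    BddAbove ((fun x' => if y * h x' ≤ 0 then (1:ℝ) else 0) '' {x' | ‖x - x'‖ ≤ γ}) := by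
  refine ⟨1, ?_⟩
  rintro _ ⟨x', -, rfl⟩
  dsimp only
  split <;> norm_num

lemma lossGamma_nonneg (hγ : 0 ≤ γ) (h : E → ℝ) (x : E) (y : ℝ) : 0 ≤ lossGamma γ h x y := by
  refine le_trans ?_ (le_csSup (lossGamma_bddAbove h x y) ⟨x, by simpa using hγ, rfl⟩)
  dsimp only
  split <;> norm_num

lemma one_le_lossGamma {h : E → ℝ} {x x' : E} {y : ℝ} (hx' : ‖x - x'‖ ≤ γ) (hy : y * h x' ≤ 0) :
    1 ≤ lossGamma γ h x y :=
  le_csSup_of_le (lossGamma_bddAbove h x y) ⟨x', hx', rfl⟩ (by simp [hy])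

lemma lossGamma_eq_of_forall (hγ : 0 ≤ γ) {h : E → ℝ} {x : E} {y : ℝ} (P : Prop) [Decidable P]
    (hP : ∀ x', ‖x - x'‖ ≤ γ → (y * h x' ≤ 0 ↔ P)) :
    lossGamma γ h x y = if P then 1 else 0 := by
  have hconst : ∀ x' ∈ {x' | ‖x - x'‖ ≤ γ},
      (if y * h x' ≤ 0 then (1:ℝ) else 0) = if P then 1 else 0 :=
    fun x' hx' => by simp only [hP x' hx']
  rw [lossGamma, image_congr hconst, (setOf_norm_sub_le_nonempty hγ x).image_const,
    csSup_singleton]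

lemma condRiskT_lossGamma_of_oSup_neg (hγ : 0 ≤ γ) {h : E → ℝ} {x : E} (ho : oSup γ h x < 0)
    (s : ℝ) : condRiskT (lossGamma γ) h x s = s := by
  have hneg := fun x' (hx' : ‖x - x'‖ ≤ γ) => lt_zero_of_oSup_lt_zero ho hx'
  rw [condRiskT, lossGamma_eq_of_forall hγ True fun x' hx' => by simp [(hneg x' hx').le],
    lossGamma_eq_of_forall hγ False fun x' hx' => by simp [hneg x' hx']]
  simp

lemma condRiskT_lossGamma_neg_of_oSup_neg (hγ : 0 ≤ γ) {h : E → ℝ} {x : E}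
    (ho : oSup γ h x < 0) (s : ℝ) : condRiskT (lossGamma γ) (fun y => -h y) x s = 1 - s := by
  have hneg := fun x' (hx' : ‖x - x'‖ ≤ γ) => lt_zero_of_oSup_lt_zero ho hx'
  rw [condRiskT, lossGamma_eq_of_forall hγ False fun x' hx' => by simp [hneg x' hx'],
    lossGamma_eq_of_forall hγ True fun x' hx' => by simp [(hneg x' hx').le]]
  simp

/-- The centre `x` of the ball already forces a loss of `1` for one of the two labels. -/
lemma one_sub_le_condRiskT_lossGamma (hγ : 0 ≤ γ) (h : E → ℝ) (x : E) {s : ℝ} (hs : 1 / 2 ≤ s)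
    (hs1 : s ≤ 1) : 1 - s ≤ condRiskT (lossGamma γ) h x s := by
  have hx : ‖x - x‖ ≤ γ := by simpa using hγ
  have hpos := lossGamma_nonneg hγ h x 1
  have hneg := lossGamma_nonneg hγ h x (-1)
  rw [condRiskT]
  rcases le_or_gt (h x) 0 with hle | hlt
  · have := one_le_lossGamma (y := 1) hx (by simpa using hle)
    nlinarith
  · have := one_le_lossGamma (y := -1) hx (by simpa using hlt.le)
    nlinarith

lemma deltaCT_lossGamma_of_oSup_neg (hγ : 0 ≤ γ) {H : Set (E → ℝ)} (hsym : IsSymmetricHyp H)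
    {h : E → ℝ} (hh : h ∈ H) {x : E} (ho : oSup γ h x < 0) {s : ℝ} (hs : 1 / 2 ≤ s)
    (hs1 : s ≤ 1) : deltaCT (lossGamma γ) H h x s = 2 * s - 1 := by
  have hleast : IsLeast ((fun h' => condRiskT (lossGamma γ) h' x s) '' H) (1 - s) :=
    ⟨⟨fun y => -h y, (hsym h).1 hh, condRiskT_lossGamma_neg_of_oSup_neg hγ ho s⟩,
      by rintro _ ⟨h', -, rfl⟩; exact one_sub_le_condRiskT_lossGamma hγ h' x hs hs1⟩
  rw [deltaCT, hleast.csInf_eq, condRiskT_lossGamma_of_oSup_neg hγ ho]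
  ring

lemma supLoss_nonneg (hγ : 0 ≤ γ) {Φ : ℝ → ℝ} (hΦ : ∀ t, 0 ≤ Φ t) (h : E → ℝ) (x : E) (y : ℝ) :
    0 ≤ supLoss γ Φ h x y := by
  by_cases hbdd : BddAbove ((fun x' => Φ (y * h x')) '' {x' | ‖x - x'‖ ≤ γ})
  · exact (hΦ (y * h x)).trans (le_csSup hbdd ⟨x, by simpa using hγ, rfl⟩)
  · rw [supLoss, Real.sSup_of_not_bddAbove hbdd]

lemma deltaCT_supLoss_nonneg (hγ : 0 ≤ γ) {Φ : ℝ → ℝ} (hΦ : ∀ t, 0 ≤ Φ t) {H : Set (E → ℝ)}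
    {h : E → ℝ} (hh : h ∈ H) (x : E) {s : ℝ} (hs0 : 0 ≤ s) (hs1 : s ≤ 1) :
    0 ≤ deltaCT (supLoss γ Φ) H h x s := by
  have hbdd : BddBelow ((fun h' => condRiskT (supLoss γ Φ) h' x s) '' H) := by
    refine ⟨0, ?_⟩
    rintro _ ⟨h', -, rfl⟩
    have := supLoss_nonneg hγ hΦ h' x 1
    have := supLoss_nonneg hγ hΦ h' x (-1)
    dsimp only [condRiskT]
    nlinarith
  exact sub_nonneg.2 (csInf_le hbdd ⟨h, hh, rfl⟩)

end AdversarialLosses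

lemma deltaC_const {X : Type*} (ℓ : (X → ℝ) → X → ℝ → ℝ) (s : ℝ) (H : Set (X → ℝ))
    (h : X → ℝ) (x : X) : deltaC ℓ (fun _ => s) H h x = deltaCT ℓ H h x s :=
  rfl

section Dirac

open MeasureTheory

variable {X : Type*} [MeasurableSpace X] [MeasurableSingletonClass X] {XS : Set X} {x : X}
  (ℓ : (X → ℝ) → X → ℝ → ℝ) (η : X → ℝ) (H : Set (X → ℝ))

lemma genErrS_dirac (hx : x ∈ XS) (h : X → ℝ) :
    genErrS (Measure.dirac x) XS ℓ η h = condRisk ℓ η h x := by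
  classical
  rw [genErrS, setIntegral_dirac, if_pos hx]

lemma bestErrS_dirac (hx : x ∈ XS) :
    bestErrS (Measure.dirac x) XS ℓ η H = condRiskStar ℓ η H x := by
  simp only [bestErrS, condRiskStar, genErrS_dirac ℓ η hx]

lemma minGapS_dirac (hx : x ∈ XS) : minGapS (Measure.dirac x) XS ℓ η H = 0 := by
  classical
  rw [minGapS, bestErrS_dirac ℓ η H hx, setIntegral_dirac, if_pos hx, sub_self]

lemma excessRisk_add_minGapS_dirac (hx : x ∈ XS) (h : X → ℝ) :
    genErrS (Measure.dirac x) XS ℓ η h - bestErrS (Measure.dirac x) XS ℓ η H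
      + minGapS (Measure.dirac x) XS ℓ η H = deltaC ℓ η H h x := by
  rw [genErrS_dirac ℓ η hx, bestErrS_dirac ℓ η H hx, minGapS_dirac ℓ η H hx, add_zero, deltaC]

end Dirac

open MeasureTheory Set in
theorem adversarial_tightness_general
    {d : ℕ} {p : ℝ≥0∞} [Fact (1 ≤ p)]
    [MeasurableSpace (PiLp p (fun _ : Fin d => ℝ))]
    [BorelSpace (PiLp p (fun _ : Fin d => ℝ))]
    (γ : ℝ) (hγ : 0 < γ)
    (XS : Set (PiLp p (fun _ : Fin d => ℝ)))
    (H : Set (PiLp p (fun _ : Fin d => ℝ) → ℝ))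
    (hsym : IsSymmetricHyp H)
    (hexist : ∃ x ∈ XS, Hbar γ H x ≠ H)
    (Φ : ℝ → ℝ) (hΦpos : ∀ t, 0 ≤ Φ t)
    (That₂ T₁ T₂ TΦ : ℝ → ℝ)
    (hThat₂ : ∀ t : ℝ, That₂ t =
      sInf {r : ℝ | ∃ x ∈ XS, ∃ h ∈ H, oSup γ h x < 0 ∧
        r = deltaCT (supLoss γ Φ) H h x ((t + 1) / 2)})
    (hT₂ : ∀ t : ℝ, T₂ t = That₂ t)
    (hTΦ : ∀ t : ℝ, TΦ t = min (T₁ t) (T₂ t))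
    (hT₂leT₁ : ∀ t ∈ Icc (0:ℝ) 1, T₂ t ≤ T₁ t) :
    ∀ t ∈ Icc (0:ℝ) 1, ∀ δ : ℝ, 0 < δ →
      ∃ μ : Measure (PiLp p (fun _ : Fin d => ℝ)), IsProbabilityMeasure μ ∧ μ XS = 1 ∧
      ∃ η : PiLp p (fun _ : Fin d => ℝ) → ℝ, Measurable η ∧ (∀ x, η x ∈ Icc (0:ℝ) 1) ∧
      ∃ h ∈ H,
        genErrS μ XS (lossGamma γ) η h - bestErrS μ XS (lossGamma γ) η H
          + minGapS μ XS (lossGamma γ) η H = t ∧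
        TΦ t ≤ genErrS μ XS (supLoss γ Φ) η h - bestErrS μ XS (supLoss γ Φ) η H
                + minGapS μ XS (supLoss γ Φ) η H ∧
        genErrS μ XS (supLoss γ Φ) η h - bestErrS μ XS (supLoss γ Φ) η H
                + minGapS μ XS (supLoss γ Φ) η H ≤ TΦ t + δ := by
  intro t ht δ hδ
  have hs0 : 0 ≤ (t + 1) / 2 := by linarith [ht.1]
  have hs : 1 / 2 ≤ (t + 1) / 2 := by linarith [ht.1]
  have hs1 : (t + 1) / 2 ≤ 1 := by linarith [ht.2]
  obtain ⟨x₀, hx₀, hne⟩ := hexist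
  obtain ⟨h₀, hh₀, ho₀⟩ := exists_oSup_neg_of_Hbar_ne hsym hne
  set S := {r : ℝ | ∃ x ∈ XS, ∃ h ∈ H, oSup γ h x < 0 ∧
    r = deltaCT (supLoss γ Φ) H h x ((t + 1) / 2)}
  have hTΦ_eq : TΦ t = sInf S := by rw [hTΦ, min_eq_right (hT₂leT₁ t ht), hT₂, hThat₂]
  have hSbdd : BddBelow S := ⟨0, by
    rintro _ ⟨x, -, h, hh, -, rfl⟩
    exact deltaCT_supLoss_nonneg hγ.le hΦpos hh x hs0 hs1⟩
  obtain ⟨_, ⟨x, hx, h, hh, ho, rfl⟩, hlt⟩ :=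
    Real.lt_sInf_add_pos (s := S) ⟨_, x₀, hx₀, h₀, hh₀, ho₀, rfl⟩ hδ
  refine ⟨Measure.dirac x, inferInstance, by simp [hx], fun _ => (t + 1) / 2, measurable_const,
    fun _ => ⟨hs0, hs1⟩, h, hh, ?_⟩
  simp only [excessRisk_add_minGapS_dirac _ _ H hx, deltaC_const,
    deltaCT_lossGamma_of_oSup_neg hγ.le hsym hh ho hs hs1]
  refine ⟨by ring, hTΦ_eq ▸ csInf_le hSbdd ⟨x, hx, h, hh, ho, rfl⟩, by linarith⟩

open MeasureTheory Set in
/-- **Adversarial tightness** (Theorem 7). -/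
theorem adversarial_tightness
    {d : ℕ} {p : ℝ≥0∞} [Fact (1 ≤ p)]
    [MeasurableSpace (PiLp p (fun _ : Fin d => ℝ))]
    [BorelSpace (PiLp p (fun _ : Fin d => ℝ))]
    (γ : ℝ) (hγ : 0 < γ)
    (XS : Set (PiLp p (fun _ : Fin d => ℝ))) (hXSne : XS.Nonempty)
    (hXSmeas : MeasurableSet XS)
    (H : Set (PiLp p (fun _ : Fin d => ℝ) → ℝ)) (hHne : H.Nonempty)
    (hHmeas : ∀ h ∈ H, Measurable h)
    (hsym : IsSymmetricHyp H)
    (hexist : ∃ x ∈ XS, Hbar γ H x ≠ H)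
    (Φ : ℝ → ℝ) (hΦpos : ∀ t, 0 ≤ Φ t)
    (That₁ That₂ T₁ T₂ TΦ : ℝ → ℝ)
    (hThat₁ : ∀ t : ℝ, That₁ t =
      sInf {r : ℝ | ∃ x ∈ XS, ∃ h, h ∈ Hbar γ H x ∧ Hbar γ H x ⊂ H ∧
        r = deltaCT (supLoss γ Φ) H h x t})
    (hThat₂ : ∀ t : ℝ, That₂ t =
      sInf {r : ℝ | ∃ x ∈ XS, ∃ h ∈ H, oSup γ h x < 0 ∧
        r = deltaCT (supLoss γ Φ) H h x ((t + 1) / 2)})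
    (hT₁ : ∀ t : ℝ, T₁ t = if (1/2 : ℝ) ≤ t then That₁ t else 2 * That₁ (1/2) * t)
    (hT₂ : ∀ t : ℝ, T₂ t = That₂ t)
    (hTΦ : ∀ t : ℝ, TΦ t = min (T₁ t) (T₂ t))
    (hTconv : ConvexOn ℝ (Icc (0:ℝ) 1) TΦ) (hT0 : TΦ 0 = 0)
    (hT₂leT₁ : ∀ t ∈ Icc (0:ℝ) 1, T₂ t ≤ T₁ t) :
    ∀ t ∈ Icc (0:ℝ) 1, ∀ δ : ℝ, 0 < δ →
      ∃ μ : Measure (PiLp p (fun _ : Fin d => ℝ)), IsProbabilityMeasure μ ∧ μ XS = 1 ∧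
      ∃ η : PiLp p (fun _ : Fin d => ℝ) → ℝ, Measurable η ∧ (∀ x, η x ∈ Icc (0:ℝ) 1) ∧
      ∃ h ∈ H,
        genErrS μ XS (lossGamma γ) η h - bestErrS μ XS (lossGamma γ) η H
          + minGapS μ XS (lossGamma γ) η H = t ∧
        TΦ t ≤ genErrS μ XS (supLoss γ Φ) η h - bestErrS μ XS (supLoss γ Φ) η H
                + minGapS μ XS (supLoss γ Φ) η H ∧
        genErrS μ XS (supLoss γ Φ) η h - bestErrS μ XS (supLoss γ Φ) η H
                + minGapS μ XS (supLoss γ Φ) η H ≤ TΦ t + δ :=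
  adversarial_tightness_general γ hγ XS H hsym hexist Φ hΦpos That₂ T₁ T₂ TΦ hThat₂ hT₂ hTΦ hT₂leT₁
end

section
/- Adversarial estimation error bound for one-hidden-layer ReLU networks with the supremum-based ρ-margin loss: Let ε≥0 and let D be a distribution over X×Y such that M_{Φ̃_ρ,H_NN} ≤ ε. Then for every h∈H_NN, R_{ℓ_γ}(h) − R*_{ℓ_γ,H_NN} ≤ ρ·(R_{Φ̃_ρ}(h) − R*_{Φ̃_ρ,H_NN} + ε)/min{Λ·B, ρ}. -/
open MeasureTheory Set
open scoped ENNReal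

noncomputable section

/-- The one-hidden-layer ReLU network hypothesis set
`H_NN = {x ↦ ∑_j u_j (w_j·x + b)_+ : ‖u‖₁ ≤ Λ, ‖w_j‖_q ≤ W, |b| ≤ B}`. -/
def nnHyp (d n : ℕ) (p q : ℝ≥0∞) [Fact (1 ≤ q)] (Λ W B : ℝ) :
    Set (PiLp p (fun _ : Fin d => ℝ) → ℝ) :=
  {h | ∃ (u : Fin n → ℝ) (w : Fin n → PiLp q (fun _ : Fin d => ℝ)) (b : ℝ),
    (∑ j, |u j|) ≤ Λ ∧ (∀ j, ‖w j‖ ≤ W) ∧ |b| ≤ B ∧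
    h = fun x => ∑ j, u j * max ((∑ i, w j i * x i) + b) 0}

/-- The `ρ`-margin loss `Φ_ρ(t) = min{1, max{0, 1 − t/ρ}}`. -/
def rhoMargin (ρ : ℝ) (t : ℝ) : ℝ := min 1 (max 0 (1 - t / ρ))

end


/-!
At a point `x` with `η(x) = t`, every hypothesis has conditional adversarial zero-one risk at
least `min(t, 1 - t)`, since `x` itself lies in its own `γ`-ball. The network class is closed
under negation and contains the constants `±ΛB`, and `Φ_ρ(ΛB) = 1 - ν` with
`ν = min(ΛB, ρ)/ρ`. Bounding the best conditional `Φ̃_ρ`-risk by the risks of `h`, `-h` and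
`±ΛB` gives the pointwise calibration inequality
`ν · (C_{ℓ_γ}(h, x) - min(t, 1 - t)) ≤ ΔC_{Φ̃_ρ}(h, x)`;
integrating it and inserting the minimizability gap yields the estimation error bound.
-/

structure IsBoundedMarginLoss (Φ : ℝ → ℝ) : Prop where
  nonneg : ∀ t, 0 ≤ Φ t
  le_one : ∀ t, Φ t ≤ 1
  eq_one_of_nonpos : ∀ t ≤ 0, Φ t = 1

noncomputable def zeroOneMargin (t : ℝ) : ℝ := if t ≤ 0 then 1 else 0

theorem isBoundedMarginLoss_zeroOneMargin : IsBoundedMarginLoss zeroOneMargin where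
  nonneg t := by unfold zeroOneMargin; split_ifs <;> norm_num
  le_one t := by unfold zeroOneMargin; split_ifs <;> norm_num
  eq_one_of_nonpos t ht := if_pos ht

theorem isBoundedMarginLoss_rhoMargin {ρ : ℝ} (hρ : 0 < ρ) :
    IsBoundedMarginLoss (rhoMargin ρ) where
  nonneg _ := le_min zero_le_one (le_max_left _ _)
  le_one _ := min_le_left _ _
  eq_one_of_nonpos t ht := by
    have : t / ρ ≤ 0 := div_nonpos_of_nonpos_of_nonneg ht hρ.le
    exact min_eq_left (le_max_of_le_right (by linarith))

theorem one_sub_rhoMargin {ρ c : ℝ} (hρ : 0 < ρ) (hc : 0 ≤ c) :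
    1 - rhoMargin ρ c = min c ρ / ρ := by
  unfold rhoMargin
  rcases le_total c ρ with hcρ | hρc
  · have : c / ρ ≤ 1 := (div_le_one hρ).2 hcρ
    have : 0 ≤ c / ρ := div_nonneg hc hρ.le
    rw [min_eq_left hcρ, max_eq_right (by linarith), min_eq_right (by linarith)]
    ring
  · have : 1 ≤ c / ρ := (one_le_div hρ).2 hρc
    rw [min_eq_right hρc, div_self hρ.ne', max_eq_left (by linarith), min_eq_right zero_le_one]
    ring

section SupLoss

variable {E : Type*} [NormedAddCommGroup E] {γ : ℝ} {Φ : ℝ → ℝ}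

theorem lossGamma_eq_supLoss : lossGamma (E := E) γ = supLoss γ zeroOneMargin := rfl

theorem mem_closedBall_self_of_nonneg (hγ : 0 ≤ γ) (x : E) :
    x ∈ {x' : E | ‖x - x'‖ ≤ γ} := by
  simpa using hγ

theorem le_supLoss (hΦ : ∀ t, Φ t ≤ 1) (h : E → ℝ) {x x' : E} (hx' : ‖x - x'‖ ≤ γ)
    (y : ℝ) :
    Φ (y * h x') ≤ supLoss γ Φ h x y :=
  le_csSup ⟨1, by rintro _ ⟨_, _, rfl⟩; exact hΦ _⟩ ⟨x', hx', rfl⟩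

theorem supLoss_le_one (hγ : 0 ≤ γ) (hΦ : ∀ t, Φ t ≤ 1) (h : E → ℝ) (x : E) (y : ℝ) :
    supLoss γ Φ h x y ≤ 1 :=
  csSup_le ⟨_, x, mem_closedBall_self_of_nonneg hγ x, rfl⟩
    (by rintro _ ⟨_, _, rfl⟩; exact hΦ _)

theorem supLoss_mono {Ψ : ℝ → ℝ} (hγ : 0 ≤ γ) (hΦΨ : ∀ t, Φ t ≤ Ψ t) (hΨ : ∀ t, Ψ t ≤ 1)
    (h : E → ℝ) (x : E) (y : ℝ) : supLoss γ Φ h x y ≤ supLoss γ Ψ h x y :=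
  csSup_le ⟨_, x, mem_closedBall_self_of_nonneg hγ x, rfl⟩
    (by rintro _ ⟨_, hx', rfl⟩; exact (hΦΨ _).trans (le_supLoss hΨ h hx' y))

namespace IsBoundedMarginLoss

variable (hΦ : IsBoundedMarginLoss Φ)
include hΦ

theorem supLoss_nonneg (hγ : 0 ≤ γ) (h : E → ℝ) (x : E) (y : ℝ) : 0 ≤ supLoss γ Φ h x y :=
  (hΦ.nonneg _).trans (le_supLoss hΦ.le_one h (mem_closedBall_self_of_nonneg hγ x) y)

theorem supLoss_eq_one {h : E → ℝ} {x x' : E} (hx' : ‖x - x'‖ ≤ γ) {y : ℝ}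
    (hy : y * h x' ≤ 0) :
    supLoss γ Φ h x y = 1 :=
  le_antisymm (supLoss_le_one ((norm_nonneg _).trans hx') hΦ.le_one h x y)
    (hΦ.eq_one_of_nonpos _ hy ▸ le_supLoss hΦ.le_one h hx' y)

theorem zeroOneMargin_le (t : ℝ) : zeroOneMargin t ≤ Φ t := by
  unfold zeroOneMargin
  split_ifs with ht
  · exact (hΦ.eq_one_of_nonpos t ht).ge
  · exact hΦ.nonneg t

theorem lossGamma_le_supLoss (hγ : 0 ≤ γ) (h : E → ℝ) (x : E) (y : ℝ) :
    lossGamma γ h x y ≤ supLoss γ Φ h x y :=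
  supLoss_mono hγ hΦ.zeroOneMargin_le hΦ.le_one h x y

end IsBoundedMarginLoss

theorem supLoss_const (hγ : 0 ≤ γ) (c : ℝ) (x : E) (y : ℝ) :
    supLoss γ Φ (fun _ => c) x y = Φ (y * c) := by
  unfold supLoss
  rw [Set.Nonempty.image_const ⟨x, mem_closedBall_self_of_nonneg hγ x⟩, csSup_singleton]

theorem supLoss_neg (h : E → ℝ) (x : E) (y : ℝ) :
    supLoss γ Φ (fun z => -h z) x y = supLoss γ Φ h x (-y) := by
  simp only [supLoss, mul_neg, neg_mul]

theorem lossGamma_eq_zero_or_one (hγ : 0 ≤ γ) (h : E → ℝ) (x : E) (y : ℝ) :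
    lossGamma γ h x y = 0 ∨ lossGamma γ h x y = 1 := by
  unfold lossGamma
  set S := (fun x' => if y * h x' ≤ 0 then (1 : ℝ) else 0) '' {x' | ‖x - x'‖ ≤ γ}
  have hS : S ⊆ {0, 1} := by
    rintro _ ⟨_, -, rfl⟩
    dsimp only
    split_ifs <;> simp
  have hne : S.Nonempty := ⟨_, x, mem_closedBall_self_of_nonneg hγ x, rfl⟩
  simpa using hS (hne.csSup_mem ((toFinite _).subset hS))

theorem min_le_condRisk_lossGamma (hγ : 0 ≤ γ) {η : E → ℝ} {x : E}
    (ht : η x ∈ Icc (0 : ℝ) 1) (g : E → ℝ) :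
    min (η x) (1 - η x) ≤ condRisk (lossGamma γ) η g x := by
  have hx : ‖x - x‖ ≤ γ := mem_closedBall_self_of_nonneg hγ x
  have hΦ := isBoundedMarginLoss_zeroOneMargin
  have h₀ := hΦ.supLoss_nonneg hγ g x 1
  have h₁ := hΦ.supLoss_nonneg hγ g x (-1)
  unfold condRisk condRiskT
  rw [lossGamma_eq_supLoss]
  rcases le_or_gt (g x) 0 with hgx | hgx
  · rw [hΦ.supLoss_eq_one hx (by linarith : 1 * g x ≤ 0)]
    nlinarith [min_le_left (η x) (1 - η x), ht.2]
  · rw [hΦ.supLoss_eq_one hx (by linarith : -1 * g x ≤ 0)]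
    nlinarith [min_le_right (η x) (1 - η x), ht.1]

theorem IsBoundedMarginLoss.condRiskStar_le (hΦ : IsBoundedMarginLoss Φ) (hγ : 0 ≤ γ)
    {η : E → ℝ} {x : E} (ht : η x ∈ Icc (0 : ℝ) 1) {H : Set (E → ℝ)} {g : E → ℝ}
    (hg : g ∈ H) :
    condRiskStar (supLoss γ Φ) η H x ≤ condRisk (supLoss γ Φ) η g x := by
  refine csInf_le ⟨0, ?_⟩ ⟨g, hg, rfl⟩
  rintro _ ⟨g', -, rfl⟩
  exact add_nonneg (mul_nonneg ht.1 (hΦ.supLoss_nonneg hγ g' x 1))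
    (mul_nonneg (sub_nonneg.2 ht.2) (hΦ.supLoss_nonneg hγ g' x (-1)))

end SupLoss

theorem margin_calibration_bound {t φ a b A B C : ℝ} (ht₀ : 0 ≤ t) (ht₁ : t ≤ 1)
    (hφ : φ ≤ 1) (ha : a = 0 ∨ a = 1) (hb : b = 0 ∨ b = 1) (haA : a ≤ A) (hbB : b ≤ B)
    (hC : C ≤ t * A + (1 - t) * B) (hC_neg : C ≤ t * B + (1 - t) * A)
    (hC_pos_const : C ≤ t * φ + (1 - t) * 1) (hC_neg_const : C ≤ t * 1 + (1 - t) * φ) :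
    (1 - φ) * (t * a + (1 - t) * b - min t (1 - t)) ≤ t * A + (1 - t) * B - C := by
  rcases ha with rfl | rfl <;> rcases hb with rfl | rfl <;>
    rcases le_total t (1 - t) with ht | ht <;> simp only [min_eq_left, min_eq_right, ht] <;>
    nlinarith [mul_nonneg ht₀ (sub_nonneg.2 ht₁)]

section Calibration

variable {E : Type*} [NormedAddCommGroup E] {γ : ℝ} {Φ : ℝ → ℝ} {η : E → ℝ} {x : E}
  {H : Set (E → ℝ)}

theorem IsBoundedMarginLoss.condRiskStar_le_const (hΦ : IsBoundedMarginLoss Φ) (hγ : 0 ≤ γ)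
    (ht : η x ∈ Icc (0 : ℝ) 1) {c : ℝ} (hc : 0 ≤ c) (hcH : (fun _ => c) ∈ H) :
    condRiskStar (supLoss γ Φ) η H x ≤ η x * Φ c + (1 - η x) * 1 := by
  have := hΦ.condRiskStar_le hγ ht hcH
  rwa [condRisk, condRiskT, supLoss_const hγ, supLoss_const hγ, one_mul,
    hΦ.eq_one_of_nonpos (-1 * c) (by linarith)] at this

theorem IsBoundedMarginLoss.condRiskStar_le_neg_const (hΦ : IsBoundedMarginLoss Φ)
    (hγ : 0 ≤ γ) (ht : η x ∈ Icc (0 : ℝ) 1) {c : ℝ} (hc : 0 ≤ c) (hcH : (fun _ => -c) ∈ H) :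
    condRiskStar (supLoss γ Φ) η H x ≤ η x * 1 + (1 - η x) * Φ c := by
  have := hΦ.condRiskStar_le hγ ht hcH
  rwa [condRisk, condRiskT, supLoss_const hγ, supLoss_const hγ, neg_one_mul, neg_neg,
    hΦ.eq_one_of_nonpos (1 * -c) (by linarith)] at this

theorem IsBoundedMarginLoss.mul_sub_min_le_deltaC (hΦ : IsBoundedMarginLoss Φ) (hγ : 0 ≤ γ)
    (ht : η x ∈ Icc (0 : ℝ) 1) (hH : IsSymmetricHyp H) {c : ℝ} (hc : 0 ≤ c)
    (hcH : (fun _ => c) ∈ H) {h : E → ℝ} (hh : h ∈ H) :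
    (1 - Φ c) * (condRisk (lossGamma γ) η h x - min (η x) (1 - η x))
      ≤ deltaC (supLoss γ Φ) η H h x := by
  have hC := hΦ.condRiskStar_le hγ ht hh
  have hC_neg := hΦ.condRiskStar_le hγ ht ((hH h).1 hh)
  rw [condRisk, condRiskT, supLoss_neg, supLoss_neg, neg_neg] at hC_neg
  have hC_pos_const := hΦ.condRiskStar_le_const hγ ht hc hcH
  have hC_neg_const := hΦ.condRiskStar_le_neg_const hγ ht hc ((hH _).1 hcH)
  exact margin_calibration_bound ht.1 ht.2 (hΦ.le_one c) (lossGamma_eq_zero_or_one hγ h x 1)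
    (lossGamma_eq_zero_or_one hγ h x (-1)) (hΦ.lossGamma_le_supLoss hγ h x 1)
    (hΦ.lossGamma_le_supLoss hγ h x (-1)) hC hC_neg hC_pos_const hC_neg_const

end Calibration

section Network

variable {d n : ℕ} {p q : ℝ≥0∞} [Fact (1 ≤ q)] {Λ W B : ℝ}

theorem neg_mem_nnHyp {g : PiLp p (fun _ : Fin d => ℝ) → ℝ}
    (hg : g ∈ nnHyp d n p q Λ W B) :
    (fun x => -g x) ∈ nnHyp d n p q Λ W B := by
  obtain ⟨u, w, b, hu, hw, hb, rfl⟩ := hg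
  refine ⟨-u, w, b, by simpa using hu, hw, hb, ?_⟩
  simp [Finset.sum_neg_distrib]

theorem isSymmetricHyp_nnHyp : IsSymmetricHyp (nnHyp d n p q Λ W B) :=
  fun _ => ⟨neg_mem_nnHyp, fun hg => by simpa using neg_mem_nnHyp hg⟩

theorem const_mem_nnHyp (hn : n ≠ 0) (hΛ : 0 ≤ Λ) (hW : 0 ≤ W) (hB : 0 ≤ B) :
    (fun _ => Λ * B) ∈ nnHyp d n p q Λ W B := by
  have hn' : (n : ℝ) ≠ 0 := Nat.cast_ne_zero.2 hn
  refine ⟨fun _ => Λ / n, fun _ => 0, B, ?_, fun _ => by simpa using hW,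
    (abs_of_nonneg hB).le, ?_⟩
  · simp [abs_of_nonneg (div_nonneg hΛ n.cast_nonneg), mul_div_cancel₀ _ hn']
  · funext x
    simp only [PiLp.zero_apply, zero_mul, Finset.sum_const_zero, zero_add, max_eq_left hB,
      Finset.sum_const, Finset.card_univ, Fintype.card_fin, nsmul_eq_mul]
    field_simp

theorem eq_zero_of_mem_nnHyp_zero {g : PiLp p (fun _ : Fin d => ℝ) → ℝ}
    (hg : g ∈ nnHyp d 0 p q Λ W B) : g = 0 := by
  obtain ⟨u, w, b, -, -, -, rfl⟩ := hg
  funext x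
  simp

end Network

theorem condRisk_lossGamma_sub_le_of_mem_nnHyp {d n : ℕ} {p q : ℝ≥0∞} [Fact (1 ≤ p)]
    [Fact (1 ≤ q)] {γ Λ W B ρ : ℝ} (hγ : 0 ≤ γ) (hΛ : 0 < Λ) (hW : 0 ≤ W) (hB : 0 < B)
    (hρ : 0 < ρ) {η : PiLp p (fun _ : Fin d => ℝ) → ℝ} {x : PiLp p (fun _ : Fin d => ℝ)}
    (ht : η x ∈ Icc (0 : ℝ) 1) {h g : PiLp p (fun _ : Fin d => ℝ) → ℝ}
    (hh : h ∈ nnHyp d n p q Λ W B) (hg : g ∈ nnHyp d n p q Λ W B) :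
    condRisk (lossGamma γ) η h x - condRisk (lossGamma γ) η g x
      ≤ ρ / min (Λ * B) ρ * deltaC (supLoss γ (rhoMargin ρ)) η (nnHyp d n p q Λ W B) h x := by
  have hΦ := isBoundedMarginLoss_rhoMargin hρ
  have hm : 0 < min (Λ * B) ρ := lt_min (mul_pos hΛ hB) hρ
  have hΔ : 0 ≤ deltaC (supLoss γ (rhoMargin ρ)) η (nnHyp d n p q Λ W B) h x :=
    sub_nonneg.2 (hΦ.condRiskStar_le hγ ht hh)
  rcases eq_or_ne n 0 with rfl | hn
  · obtain rfl := eq_zero_of_mem_nnHyp_zero hh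
    obtain rfl := eq_zero_of_mem_nnHyp_zero hg
    rw [sub_self]
    exact mul_nonneg (div_nonneg hρ.le hm.le) hΔ
  have hcal := hΦ.mul_sub_min_le_deltaC hγ ht isSymmetricHyp_nnHyp (mul_pos hΛ hB).le
    (const_mem_nnHyp hn hΛ.le hW hB.le) hh
  rw [one_sub_rhoMargin hρ (mul_pos hΛ hB).le, div_mul_eq_mul_div, div_le_iff₀ hρ] at hcal
  rw [div_mul_eq_mul_div, le_div_iff₀ hm]
  nlinarith [min_le_condRisk_lossGamma hγ ht g]

theorem genErrS_sub_bestErrS_le_of_condRisk_sub_le {X : Type*} [MeasurableSpace X]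
    {μ : Measure X} {S : Set X} {ℓ ψ : (X → ℝ) → X → ℝ → ℝ} {η : X → ℝ} {H : Set (X → ℝ)}
    {k : ℝ} {h : X → ℝ} (hh : h ∈ H) (hℓ : ∀ g ∈ H, IntegrableOn (condRisk ℓ η g) S μ)
    (hψ : IntegrableOn (condRisk ψ η h) S μ)
    (hψ_star : IntegrableOn (condRiskStar ψ η H) S μ)
    (hbound : ∀ g ∈ H, ∀ x,
      condRisk ℓ η h x - condRisk ℓ η g x ≤ k * deltaC ψ η H h x) :
    genErrS μ S ℓ η h - bestErrS μ S ℓ η H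
      ≤ k * (genErrS μ S ψ η h - bestErrS μ S ψ η H + minGapS μ S ψ η H) := by
  have hint : ∀ g ∈ H, genErrS μ S ℓ η h - genErrS μ S ℓ η g
      ≤ k * (genErrS μ S ψ η h - ∫ x in S, condRiskStar ψ η H x ∂μ) := by
    intro g hg
    have :=
      setIntegral_mono ((hℓ h hh).sub (hℓ g hg)) ((hψ.sub hψ_star).const_mul k) (hbound g hg)
    simp only [Pi.sub_apply] at this
    rwa [integral_sub (hℓ h hh) (hℓ g hg), integral_const_mul, integral_sub hψ hψ_star] at this
  rw [minGapS, sub_add_sub_cancel, sub_le_comm]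
  refine le_csInf ⟨_, h, hh, rfl⟩ ?_
  rintro _ ⟨g, hg, rfl⟩
  linarith [hint g hg]

open MeasureTheory Set in
theorem adversarial_bound_nn_sup_rho_margin_general
    {d n : ℕ} {p q : ℝ≥0∞} [Fact (1 ≤ p)] [Fact (1 ≤ q)]
    [MeasurableSpace (PiLp p (fun _ : Fin d => ℝ))]
    (γ : ℝ) (hγ : γ ∈ Ioo (0:ℝ) 1)
    (Λ W B ρ : ℝ) (hΛ : 0 < Λ) (hW : 0 < W) (hB : 0 < B) (hρ : 0 < ρ)
    (μ : Measure (PiLp p (fun _ : Fin d => ℝ)))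
    (η : PiLp p (fun _ : Fin d => ℝ) → ℝ)
    (hη01 : ∀ x, η x ∈ Icc (0:ℝ) 1)
    (hIntγ : ∀ g ∈ nnHyp d n p q Λ W B,
      IntegrableOn (condRisk (lossGamma γ) η g) {x | ‖x‖ ≤ 1} μ)
    (hIntΦ : ∀ g ∈ nnHyp d n p q Λ W B,
      IntegrableOn (condRisk (supLoss γ (rhoMargin ρ)) η g) {x | ‖x‖ ≤ 1} μ)
    (hIntSΦ : IntegrableOn
      (condRiskStar (supLoss γ (rhoMargin ρ)) η (nnHyp d n p q Λ W B)) {x | ‖x‖ ≤ 1} μ)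
    (ε : ℝ)
    (hgap : minGapS μ {x | ‖x‖ ≤ 1} (supLoss γ (rhoMargin ρ)) η (nnHyp d n p q Λ W B) ≤ ε)
    (h : PiLp p (fun _ : Fin d => ℝ) → ℝ) (hh : h ∈ nnHyp d n p q Λ W B) :
    genErrS μ {x | ‖x‖ ≤ 1} (lossGamma γ) η h
        - bestErrS μ {x | ‖x‖ ≤ 1} (lossGamma γ) η (nnHyp d n p q Λ W B)
      ≤ ρ * (genErrS μ {x | ‖x‖ ≤ 1} (supLoss γ (rhoMargin ρ)) η h
          - bestErrS μ {x | ‖x‖ ≤ 1} (supLoss γ (rhoMargin ρ)) η (nnHyp d n p q Λ W B)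
          + ε) / min (Λ * B) ρ := by
  have hpointwise : ∀ g ∈ nnHyp d n p q Λ W B, ∀ x,
      condRisk (lossGamma γ) η h x - condRisk (lossGamma γ) η g x
        ≤ ρ / min (Λ * B) ρ * deltaC (supLoss γ (rhoMargin ρ)) η (nnHyp d n p q Λ W B) h x :=
    fun g hg x => condRisk_lossGamma_sub_le_of_mem_nnHyp hγ.1.le hΛ hW.le hB hρ (hη01 x) hh hg
  rw [mul_div_right_comm]
  refine (genErrS_sub_bestErrS_le_of_condRisk_sub_le hh hIntγ (hIntΦ h hh) hIntSΦ
    hpointwise).trans ?_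
  gcongr

open MeasureTheory Set in
/-- **Adversarial estimation error bound for one-hidden-layer ReLU networks with the
supremum-based ρ-margin loss** (Corollary 4). -/
theorem adversarial_bound_nn_sup_rho_margin
    {d n : ℕ} {p q : ℝ≥0∞} [Fact (1 ≤ p)] [Fact (1 ≤ q)] (hpq : 1/p + 1/q = 1)
    [MeasurableSpace (PiLp p (fun _ : Fin d => ℝ))]
    [BorelSpace (PiLp p (fun _ : Fin d => ℝ))]
    (γ : ℝ) (hγ : γ ∈ Ioo (0:ℝ) 1)
    (Λ W B ρ : ℝ) (hΛ : 0 < Λ) (hW : 0 < W) (hB : 0 < B) (hρ : 0 < ρ)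
    (μ : Measure (PiLp p (fun _ : Fin d => ℝ))) [IsProbabilityMeasure μ]
    (hμXS : μ {x : PiLp p (fun _ : Fin d => ℝ) | ‖x‖ ≤ 1} = 1)
    (η : PiLp p (fun _ : Fin d => ℝ) → ℝ) (hηmeas : Measurable η)
    (hη01 : ∀ x, η x ∈ Icc (0:ℝ) 1)
    (hIntγ : ∀ g ∈ nnHyp d n p q Λ W B,
      IntegrableOn (condRisk (lossGamma γ) η g) {x | ‖x‖ ≤ 1} μ)
    (hIntΦ : ∀ g ∈ nnHyp d n p q Λ W B,
      IntegrableOn (condRisk (supLoss γ (rhoMargin ρ)) η g) {x | ‖x‖ ≤ 1} μ)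
    (hIntSΦ : IntegrableOn
      (condRiskStar (supLoss γ (rhoMargin ρ)) η (nnHyp d n p q Λ W B)) {x | ‖x‖ ≤ 1} μ)
    (ε : ℝ) (hε : 0 ≤ ε)
    (hgap : minGapS μ {x | ‖x‖ ≤ 1} (supLoss γ (rhoMargin ρ)) η (nnHyp d n p q Λ W B) ≤ ε)
    (h : PiLp p (fun _ : Fin d => ℝ) → ℝ) (hh : h ∈ nnHyp d n p q Λ W B) :
    genErrS μ {x | ‖x‖ ≤ 1} (lossGamma γ) η h
        - bestErrS μ {x | ‖x‖ ≤ 1} (lossGamma γ) η (nnHyp d n p q Λ W B)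
      ≤ ρ * (genErrS μ {x | ‖x‖ ≤ 1} (supLoss γ (rhoMargin ρ)) η h
          - bestErrS μ {x | ‖x‖ ≤ 1} (supLoss γ (rhoMargin ρ)) η (nnHyp d n p q Λ W B)
          + ε) / min (Λ * B) ρ :=
  adversarial_bound_nn_sup_rho_margin_general γ hγ Λ W B ρ hΛ hW hB hρ μ η hη01 hIntγ hIntΦ hIntSΦ ε
    hgap h hh
end
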